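/- arXiv:2302.13621 — 3 statements merged into one kernel-verified Lean document; each statement's English description precedes it below -/
import Mathlib

section
/- Let γ: (K,0) → (K²,0) be the plane curve γ(t) = (t³, t⁴). If ω is a 1-form on K² along the deformation γ_s(t) = (t³+st, t⁴) satisfying ω(dγ_s ∘ ∂t) = 0 for all (t,s) near (0,0), then ω must have the form ω_{(s,t)} = α(t,s)·(4t³ dX − (3t²+s) dY) for some smooth/analytic function α. In particular, the deformation γ_s does not lift to an integral deformation at s = 0 (the kernel direction degenerates). -/
/-! In `ℂ⟦t, s⟧` (`t = X 0`, `s = X 1`) the factor `4t³` multiplying `ω₂` is a unit times a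
power of the prime `t`, and `t ∤ 3t² + s`. Hence `t³ ∣ ω₁`, and cancelling `t³` in the domain
gives the form of `ω₂`. Divisibility by `X s` in a power series ring is measured by the order
with weight `1` on `s` and `0` elsewhere, which is additive over a domain; this makes `X s`
prime. -/

open MvPowerSeries

namespace MvPowerSeries

variable {σ R : Type*}

theorem X_pow_dvd_iff_le_weightedOrder [DecidableEq σ] [CommSemiring R] {s : σ} {n : ℕ}
    {φ : MvPowerSeries σ R} :
    X s ^ n ∣ φ ↔ (n : ℕ∞) ≤ φ.weightedOrder (Pi.single s 1) := by
  rw [X_pow_dvd_iff]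
  refine ⟨fun h ↦ nat_le_weightedOrder _ fun d hd ↦ h d ?_,
    fun h d hd ↦ coeff_eq_zero_of_lt_weightedOrder (Pi.single s 1) ?_⟩
  · rwa [Finsupp.weight_single_one_apply] at hd
  · rw [Finsupp.weight_single_one_apply]
    exact lt_of_lt_of_le (by exact_mod_cast hd) h

instance [CommRing R] [IsDomain R] : IsDomain (MvPowerSeries σ R) :=
  NoZeroDivisors.to_isDomain _

theorem X_prime [DecidableEq σ] [CommRing R] [IsDomain R] (s : σ) : Prime (X s : MvPowerSeries σ R) := by
  refine ⟨fun h ↦ by simpa using congrArg (coeff (Finsupp.single s 1)) h,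
    fun hu ↦ by simpa using isUnit_iff_constantCoeff.mp hu, fun a b hab ↦ ?_⟩
  rw [← pow_one (X s)] at hab ⊢
  simp only [X_pow_dvd_iff_le_weightedOrder, weightedOrder_mul, Nat.cast_one] at hab ⊢
  by_contra! hlt
  rw [Order.lt_one_iff, Order.lt_one_iff] at hlt
  simp [hlt] at hab

theorem not_X_dvd_X [CommSemiring R] [Nontrivial R] {s t : σ} (h : s ≠ t) :
    ¬(X s : MvPowerSeries σ R) ∣ X t := by
  rw [X_dvd_iff]
  push Not
  exact ⟨Finsupp.single t 1, by simp [h], by simp⟩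

end MvPowerSeries

theorem eq_mul_of_mul_add_mul_prime_pow_eq_zero {R : Type*} [CommRing R] [IsDomain R]
    {p f a b : R} (hp : Prime p) (hf : ¬p ∣ f) (n : ℕ) (h : a * f + b * p ^ n = 0) :
    ∃ c, a = c * p ^ n ∧ b = -(c * f) := by
  obtain ⟨c, rfl⟩ : p ^ n ∣ a :=
    hp.pow_dvd_of_dvd_mul_right n hf ⟨-b, by linear_combination h⟩
  refine ⟨c, mul_comm _ _, ?_⟩
  have : p ^ n * (b + c * f) = 0 := by linear_combination h
  linear_combination (mul_eq_zero.mp this).resolve_left (pow_ne_zero n hp.ne_zero)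

/-- In the deformation `γ_s(t) = (t³+st, t⁴)` of the E₆ curve, any 1-form
`ω = ω₁ dX + ω₂ dY` (with coefficients germs in the variables `t = X 0`, `s = X 1`)
annihilating the tangent directions, i.e. with `ω₁·(3t²+s) + ω₂·4t³ = 0`, must be of the
form `α·(4t³ dX − (3t²+s) dY)`.  In particular both coefficients vanish at the origin,
so the deformation `γ_s` does not lift to an integral deformation at `s = 0`. -/
theorem stmt0 (ω₁ ω₂ : MvPowerSeries (Fin 2) ℂ)
    (h : ω₁ * (3 * (X 0) ^ 2 + X 1) + ω₂ * (4 * (X 0) ^ 3) = 0) :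
    (∃ α : MvPowerSeries (Fin 2) ℂ,
        ω₁ = α * (4 * (X 0) ^ 3) ∧ ω₂ = -(α * (3 * (X 0) ^ 2 + X 1)))
    ∧ constantCoeff ω₁ = 0 ∧ constantCoeff ω₂ = 0 := by
  have hf : ¬(X 0 : MvPowerSeries (Fin 2) ℂ) ∣ 3 * X 0 ^ 2 + X 1 := by
    rw [dvd_add_right (dvd_mul_of_dvd_right (dvd_pow_self _ two_ne_zero) 3)]
    exact not_X_dvd_X (by decide)
  obtain ⟨c, hc₁, hc₂⟩ := eq_mul_of_mul_add_mul_prime_pow_eq_zero (X_prime 0) hf 3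
    (a := ω₁) (b := 4 * ω₂) (by linear_combination h)
  have h4 : (C 4⁻¹ * 4 : MvPowerSeries (Fin 2) ℂ) = 1 := by
    rw [← map_ofNat C 4, ← map_mul, inv_mul_cancel₀ (by norm_num : (4 : ℂ) ≠ 0), map_one]
  have hω₁ : ω₁ = C 4⁻¹ * c * (4 * X 0 ^ 3) := by linear_combination hc₁ - c * X 0 ^ 3 * h4
  have hω₂ : ω₂ = -(C 4⁻¹ * c * (3 * X 0 ^ 2 + X 1)) := by
    linear_combination C 4⁻¹ * hc₂ - ω₂ * h4
  refine ⟨⟨_, hω₁, hω₂⟩, ?_, ?_⟩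
  · simp [hω₁]
  · simp [hω₂]
end

section
/- Let γ(t) = (t^α, t^{α+1}h(t)) be a frontal plane curve (α ≥ 2) with q' = μ p'. A vector field germ ξ = (a,b) ∈ θ(γ) = O_1² is an infinitesimal frontal deformation of γ if and only if b' − μ a' lies in the ideal m_1^{α−1} of O_1 (equivalently b' − μ a' ∈ O_1·{p'} where p' = α t^{α−1}). Consequently F(γ) decomposes as F(γ) = K ⊕ Span_K{T₁, …, T_{α−1}} ⊕ m_1^α θ(γ), where T_j(t) = (t^j, B_j(t)), B_j(t) = j∫₀^t s^{j−1}μ(s) ds. -/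
/-!
Everything is governed by the linear map `Φ(a,b) = b' − μa'`. Since `(t^α)' = α t^{α−1}` with `α`
a unit, `(a,b) ∈ F(γ)` means `t^{α−1} ∣ Φ(a,b)`. The constant fields and the `T_j` lie in `ker Φ`,
and `m^α θ(γ)` is mapped into `(t^{α−1})` because differentiation lowers the `t`-adic order by one.
Conversely, subtracting `a(0)·(1,0) + Σ a_j T_j` from `(a,b) ∈ F(γ)` kills the coefficients of `a`
below degree `α`; then `b' = Φ(a,b) + μa'` is divisible by `t^{α−1}`, so in characteristic zero `b`
differs from the constant `b(0)` by a multiple of `t^α`.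
-/

set_option synthInstance.maxHeartbeats 1000000

open PowerSeries

noncomputable section

/-- The ℂ-linear map `(a,b) ↦ b' − μ a'`. -/
def stmt15_Φ (μ : PowerSeries ℂ) :
    (PowerSeries ℂ × PowerSeries ℂ) →ₗ[ℂ] PowerSeries ℂ :=
  (derivative ℂ).toLinearMap ∘ₗ LinearMap.snd ℂ _ _
    - (LinearMap.mulLeft ℂ μ) ∘ₗ (derivative ℂ).toLinearMap ∘ₗ LinearMap.fst ℂ _ _

/-- The space `F(γ)` of infinitesimal frontal deformations of `γ = (p,q)`, `q' = μp'`: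
`(a,b) ∈ F(γ)` iff `b' − μ a' ∈ O₁·{p'}`. -/
def stmt15_F (p μ : PowerSeries ℂ) : Submodule ℂ (PowerSeries ℂ × PowerSeries ℂ) :=
  Submodule.comap (stmt15_Φ μ) ((Ideal.span {derivative ℂ p}).restrictScalars ℂ)

namespace PowerSeries

variable {R : Type*}

theorem X_pow_dvd_derivative [CommSemiring R] {k : ℕ} {f : R⟦X⟧} (hf : X ^ (k + 1) ∣ f) :
    X ^ k ∣ derivative R f := by
  rw [X_pow_dvd_iff] at hf ⊢
  intro m hm
  rw [coeff_derivative, hf (m + 1) (by omega), zero_mul]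

theorem X_pow_succ_dvd_of_dvd_derivative [CommRing R] [IsDomain R] [CharZero R] {k : ℕ}
    {f : R⟦X⟧} (h0 : constantCoeff f = 0) (hf : X ^ k ∣ derivative R f) : X ^ (k + 1) ∣ f := by
  rw [X_pow_dvd_iff] at hf ⊢
  rintro (_ | m) hm
  · simpa using h0
  · have := hf m (by omega)
    rw [coeff_derivative, mul_eq_zero] at this
    exact this.resolve_right (by exact_mod_cast m.succ_ne_zero)

theorem X_pow_dvd_sub_sum_range_coeff [CommRing R] (n : ℕ) (f : R⟦X⟧) :
    X ^ n ∣ f - ∑ j ∈ Finset.range n, coeff j f • X ^ j := by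
  rw [X_pow_dvd_iff]
  intro m hm
  simp [coeff_X_pow, hm]

theorem span_derivative_X_pow {K : Type*} [Field K] [CharZero K] {n : ℕ} (hn : n ≠ 0) :
    Ideal.span {derivative K (X ^ n)} = Ideal.span {(X : K⟦X⟧) ^ (n - 1)} := by
  rw [derivative_pow, derivative_X, mul_one, ← map_natCast (C (R := K)),
    Ideal.span_singleton_mul_left_unit ((isUnit_iff_ne_zero.mpr (Nat.cast_ne_zero.mpr hn)).map C)]

theorem sum_range_coeff_smul_X_pow_eq [Semiring R] {n : ℕ} (hn : n ≠ 0) (a : R⟦X⟧) :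
    ∑ j ∈ Finset.range n, coeff j a • (X : R⟦X⟧) ^ j
      = coeff 0 a • 1 + ∑ j ∈ Finset.range (n - 1), coeff (j + 1) a • (X : R⟦X⟧) ^ (j + 1) := by
  obtain ⟨k, rfl⟩ : ∃ k, n = k + 1 := ⟨n - 1, by omega⟩
  rw [Finset.sum_range_succ', pow_zero, add_comm, Nat.add_sub_cancel]

section Frontal

variable {μ : ℂ⟦X⟧}

theorem stmt15_Φ_apply (a b : ℂ⟦X⟧) : stmt15_Φ μ (a, b) = derivative ℂ b - μ * derivative ℂ a :=
  rfl

theorem mem_stmt15_F_X_pow_iff {n : ℕ} (hn : n ≠ 0) {a b : ℂ⟦X⟧} :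
    (a, b) ∈ stmt15_F (X ^ n) μ ↔
      derivative ℂ b - μ * derivative ℂ a ∈ Ideal.span {(X : ℂ⟦X⟧) ^ (n - 1)} := by
  rw [stmt15_F, Submodule.mem_comap, Submodule.restrictScalars_mem, stmt15_Φ_apply,
    span_derivative_X_pow hn]

theorem ker_stmt15_Φ_le_stmt15_F (p : ℂ⟦X⟧) : LinearMap.ker (stmt15_Φ μ) ≤ stmt15_F p μ :=
  LinearMap.ker_le_comap _

theorem span_const_le_stmt15_F (p : ℂ⟦X⟧) :
    Submodule.span ℂ {((1 : ℂ⟦X⟧), (0 : ℂ⟦X⟧)), ((0 : ℂ⟦X⟧), (1 : ℂ⟦X⟧))} ≤ stmt15_F p μ := by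
  refine (Submodule.span_le.mpr ?_).trans (ker_stmt15_Φ_le_stmt15_F p)
  rintro _ (rfl | rfl) <;> simp [stmt15_Φ_apply]

theorem span_range_le_stmt15_F (p : ℂ⟦X⟧) {ι : Type*} (e : ι → ℕ) (B : ℕ → ℂ⟦X⟧)
    (hB : ∀ j, derivative ℂ (B j) = μ * derivative ℂ ((X : ℂ⟦X⟧) ^ j)) :
    Submodule.span ℂ (Set.range fun i => ((X : ℂ⟦X⟧) ^ e i, B (e i))) ≤ stmt15_F p μ := by
  refine (Submodule.span_le.mpr ?_).trans (ker_stmt15_Φ_le_stmt15_F p)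
  rintro _ ⟨i, rfl⟩
  simp [stmt15_Φ_apply, hB]

theorem prod_span_X_pow_le_stmt15_F {n : ℕ} (hn : n ≠ 0) :
    ((Ideal.span {(X : ℂ⟦X⟧) ^ n}).restrictScalars ℂ).prod
      ((Ideal.span {(X : ℂ⟦X⟧) ^ n}).restrictScalars ℂ) ≤ stmt15_F (X ^ n) μ := by
  obtain ⟨k, rfl⟩ : ∃ k, n = k + 1 := ⟨n - 1, by omega⟩
  rintro ⟨a, b⟩ ⟨ha, hb⟩
  rw [mem_stmt15_F_X_pow_iff hn, Nat.add_sub_cancel]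
  simp only [SetLike.mem_coe, Submodule.restrictScalars_mem, Ideal.mem_span_singleton] at ha hb ⊢
  exact dvd_sub (X_pow_dvd_derivative hb) (dvd_mul_of_dvd_right (X_pow_dvd_derivative ha) μ)

theorem mem_sup_of_mem_stmt15_F_of_fst_mem {n : ℕ} (hn : n ≠ 0) {x : ℂ⟦X⟧ × ℂ⟦X⟧}
    (hx : x ∈ stmt15_F (X ^ n) μ) (hx₁ : x.1 ∈ Ideal.span {(X : ℂ⟦X⟧) ^ n}) :
    x ∈ Submodule.span ℂ {((1 : ℂ⟦X⟧), (0 : ℂ⟦X⟧)), ((0 : ℂ⟦X⟧), (1 : ℂ⟦X⟧))}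
      ⊔ ((Ideal.span {(X : ℂ⟦X⟧) ^ n}).restrictScalars ℂ).prod
        ((Ideal.span {(X : ℂ⟦X⟧) ^ n}).restrictScalars ℂ) := by
  obtain ⟨k, rfl⟩ : ∃ k, n = k + 1 := ⟨n - 1, by omega⟩
  obtain ⟨a, b⟩ := x
  rw [mem_stmt15_F_X_pow_iff hn, Nat.add_sub_cancel, Ideal.mem_span_singleton] at hx
  rw [Ideal.mem_span_singleton] at hx₁
  have hb : X ^ (k + 1) ∣ b - C (constantCoeff b) := by
    refine X_pow_succ_dvd_of_dvd_derivative (by simp) ?_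
    simpa [map_sub, derivative_C] using
      dvd_add hx (dvd_mul_of_dvd_right (X_pow_dvd_derivative hx₁) μ)
  have hsplit : (a, b) = constantCoeff b • ((0 : ℂ⟦X⟧), (1 : ℂ⟦X⟧))
      + (a, b - C (constantCoeff b)) := by
    ext1 <;> simp [smul_eq_C_mul]
  rw [hsplit]
  exact Submodule.add_mem_sup (Submodule.smul_mem _ _ (Submodule.subset_span (by simp)))
    ⟨Ideal.mem_span_singleton.mpr hx₁, Ideal.mem_span_singleton.mpr hb⟩

theorem stmt15_F_X_pow_le {n : ℕ} (hn : n ≠ 0) (B : ℕ → ℂ⟦X⟧)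
    (hB : ∀ j, derivative ℂ (B j) = μ * derivative ℂ ((X : ℂ⟦X⟧) ^ j)) :
    stmt15_F (X ^ n) μ
      ≤ Submodule.span ℂ {((1 : ℂ⟦X⟧), (0 : ℂ⟦X⟧)), ((0 : ℂ⟦X⟧), (1 : ℂ⟦X⟧))}
        ⊔ Submodule.span ℂ (Set.range fun j : Fin (n - 1) =>
            ((X : ℂ⟦X⟧) ^ ((j : ℕ) + 1), B ((j : ℕ) + 1)))
        ⊔ ((Ideal.span {(X : ℂ⟦X⟧) ^ n}).restrictScalars ℂ).prod
            ((Ideal.span {(X : ℂ⟦X⟧) ^ n}).restrictScalars ℂ) := by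
  intro x hx
  set c := coeff 0 x.1 • ((1 : ℂ⟦X⟧), (0 : ℂ⟦X⟧))
  set t := ∑ j ∈ Finset.range (n - 1),
    coeff (j + 1) x.1 • ((X : ℂ⟦X⟧) ^ (j + 1), B (j + 1))
  have hc : c ∈ Submodule.span ℂ {((1 : ℂ⟦X⟧), (0 : ℂ⟦X⟧)), ((0 : ℂ⟦X⟧), (1 : ℂ⟦X⟧))} :=
    Submodule.smul_mem _ _ (Submodule.subset_span (by simp))
  have ht : t ∈ Submodule.span ℂ (Set.range fun j : Fin (n - 1) =>
      ((X : ℂ⟦X⟧) ^ ((j : ℕ) + 1), B ((j : ℕ) + 1))) :=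
    Submodule.sum_mem _ fun j hj => Submodule.smul_mem _ _
      (Submodule.subset_span ⟨⟨j, Finset.mem_range.mp hj⟩, rfl⟩)
  have hr : x - c - t ∈ stmt15_F (X ^ n) μ :=
    sub_mem (sub_mem hx (span_const_le_stmt15_F _ hc))
      (span_range_le_stmt15_F _ (fun j : Fin (n - 1) => (j : ℕ) + 1) B hB ht)
  have hr₁ : (x - c - t).1 ∈ Ideal.span {(X : ℂ⟦X⟧) ^ n} := by
    have := X_pow_dvd_sub_sum_range_coeff n x.1
    rw [sum_range_coeff_smul_X_pow_eq hn, ← sub_sub] at this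
    simpa [c, t, Prod.fst_sum, Ideal.mem_span_singleton] using this
  have hrest := mem_sup_of_mem_stmt15_F_of_fst_mem hn hr hr₁
  rw [show x = c + t + (x - c - t) by abel]
  exact Submodule.add_mem _ (Submodule.mem_sup_left (Submodule.add_mem_sup hc ht))
    (SetLike.le_def.mp (sup_le_sup_right le_sup_left _) hrest)

end Frontal

end PowerSeries

theorem stmt15_general (α : ℕ) (hα : 2 ≤ α) (μ : PowerSeries ℂ)
    (B : ℕ → PowerSeries ℂ)
    (hB : ∀ j, derivative ℂ (B j) = μ * derivative ℂ ((X : PowerSeries ℂ) ^ j)) :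
    (∀ a b : PowerSeries ℂ,
        (a, b) ∈ stmt15_F ((X : PowerSeries ℂ) ^ α) μ ↔
          derivative ℂ b - μ * derivative ℂ a ∈ Ideal.span {(X : PowerSeries ℂ) ^ (α - 1)})
    ∧ stmt15_F ((X : PowerSeries ℂ) ^ α) μ
        = Submodule.span ℂ {((1 : PowerSeries ℂ), (0 : PowerSeries ℂ)),
            ((0 : PowerSeries ℂ), (1 : PowerSeries ℂ))}
          ⊔ Submodule.span ℂ (Set.range fun j : Fin (α - 1) =>
              ((X : PowerSeries ℂ) ^ ((j : ℕ) + 1), B ((j : ℕ) + 1)))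
          ⊔ ((Ideal.span {(X : PowerSeries ℂ) ^ α}).restrictScalars ℂ).prod
              ((Ideal.span {(X : PowerSeries ℂ) ^ α}).restrictScalars ℂ) := by
  have hα₀ : α ≠ 0 := by omega
  refine ⟨fun a b => mem_stmt15_F_X_pow_iff hα₀, le_antisymm (stmt15_F_X_pow_le hα₀ B hB) ?_⟩
  exact sup_le (sup_le (span_const_le_stmt15_F _) (span_range_le_stmt15_F _ _ B hB))
    (prod_span_X_pow_le_stmt15_F hα₀)

/-- Let `γ(t) = (t^α, t^{α+1}h(t))`, `α ≥ 2`, be a frontal plane curve with `q' = μp'`,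
and let `B_j` satisfy `B_j' = μ·(t^j)'` and `B_j(0) = 0` (so `T_j = (t^j, B_j)`).  Then
`(a,b)` is an infinitesimal frontal deformation of γ iff `b' − μ a'` lies in
`m₁^{α−1} = (t^{α−1})` (equivalently, in `O₁·{p'}`), and consequently
`F(γ) = K ⊕ Span{T₁,…,T_{α−1}} ⊕ m₁^α θ(γ)` (`K` the constant fields). -/
theorem stmt15 (α : ℕ) (hα : 2 ≤ α) (h μ : PowerSeries ℂ)
    (hμ : derivative ℂ ((X : PowerSeries ℂ) ^ (α + 1) * h)
        = μ * derivative ℂ ((X : PowerSeries ℂ) ^ α))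
    (B : ℕ → PowerSeries ℂ)
    (hB : ∀ j, derivative ℂ (B j) = μ * derivative ℂ ((X : PowerSeries ℂ) ^ j))
    (hB0 : ∀ j, constantCoeff (R := ℂ) (B j) = 0) :
    (∀ a b : PowerSeries ℂ,
        (a, b) ∈ stmt15_F ((X : PowerSeries ℂ) ^ α) μ ↔
          derivative ℂ b - μ * derivative ℂ a ∈ Ideal.span {(X : PowerSeries ℂ) ^ (α - 1)})
    ∧ stmt15_F ((X : PowerSeries ℂ) ^ α) μ
        = Submodule.span ℂ {((1 : PowerSeries ℂ), (0 : PowerSeries ℂ)),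
            ((0 : PowerSeries ℂ), (1 : PowerSeries ℂ))}
          ⊔ Submodule.span ℂ (Set.range fun j : Fin (α - 1) =>
              ((X : PowerSeries ℂ) ^ ((j : ℕ) + 1), B ((j : ℕ) + 1)))
          ⊔ ((Ideal.span {(X : PowerSeries ℂ) ^ α}).restrictScalars ℂ).prod
              ((Ideal.span {(X : PowerSeries ℂ) ^ α}).restrictScalars ℂ) :=
  stmt15_general α hα μ B hB
end
end

section
/- Let g ∈ O_2 define an irreducible plane curve singularity of order 4 with semigroup of values Σ = ⟨4, v₁⟩ (v₁ coprime to 4, v₁ > 4), so δ = (3/2)(v₁ − 1). If the Tjurina number is τ = 3v₁ − j − 2 with 2 ≤ j ≤ v₁/2 and τ − δ ≤ 5, then j ≥ (3v₁ − 11)/2, forcing v₁ = 5 and the curve to be analytically equivalent to the parametrisation t ↦ (t⁴, t⁵ + t⁷). Moreover, if instead τ = 3(v₁−1), then τ − δ = (3/2)(v₁−1) ≤ 5 is impossible for v₁ ≥ 5 coprime to 4 together with τ ≥ δ. -/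
/-- Arithmetic of the classification of stable corank-1 frontals from ℂ³ to ℂ⁴, case
`ord(g) = 4`, semigroup `⟨4, v₁⟩` with `v₁` coprime to 4 and `v₁ > 4`, so that the delta
invariant satisfies `2δ = 3(v₁−1)`. If `τ = 3v₁ − j − 2` with `2 ≤ j ≤ v₁/2` and
`τ − δ ≤ 5`, then `2j ≥ 3v₁ − 11` and `v₁ = 5` (the curve `t ↦ (t⁴, t⁵+t⁷)`).
If instead `τ = 3(v₁−1)`, then `τ − δ ≤ 5` together with `τ ≥ δ` is impossible. -/
theorem stmt19 (v₁ δ : ℤ) (hv : 4 < v₁) (hcop : Int.gcd v₁ 4 = 1)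
    (hδ : 2 * δ = 3 * (v₁ - 1)) :
    (∀ j τ : ℤ, τ = 3 * v₁ - j - 2 → 2 ≤ j → 2 * j ≤ v₁ → τ - δ ≤ 5 →
      3 * v₁ - 11 ≤ 2 * j ∧ v₁ = 5)
    ∧ (∀ τ : ℤ, τ = 3 * (v₁ - 1) → δ ≤ τ → τ - δ ≤ 5 → False) := by
  constructor
  · intro j τ h1 h2 h3 h4; omega
  · intro τ h1 h2 h3; omega
end
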